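/- arXiv:2106.11508 — 4 statements merged into one kernel-verified Lean document; each statement's English description precedes it below -/
import Mathlib

section
/- For two agents a, b with binary inputs in the IIS model, the epistemic model M^1 = M^0 ⊙ C_IIS after one round of the full-information protocol is structurally a 12-cycle: it has exactly 12 worlds, and the union of the indistinguishability edges of a and b (between distinct worlds) forms a cycle graph on 12 vertices with the edges alternating between agent a and agent b. -/
/-- A communication graph on agents `Ag`: `g x y` means an edge from `x` to `y`. -/
abbrev CG (Ag : Type) := Ag → Ag → Prop

/-- In-neighborhood of agent `a` in communication graph `g`. -/
def inN {Ag : Type} (g : CG Ag) (a : Ag) : Set Ag := {b | g b a}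

/-- Agents `a := true` and `b := false`.  The three communication graphs of
two-agent IIS: `{a}{b}` (edge `a→b`), `{b}{a}` (edge `b→a`), and `{a,b}`
(both edges). -/
def IIS2 : Set (CG Bool) :=
  {(fun x y => x = true ∧ y = false),
   (fun x y => x = false ∧ y = true),
   (fun x y => x ≠ y)}

/-- Worlds of `M^1 = M^0 ⊙ C_IIS`: worlds of `M^0` are the input vectors
`I : Bool → Bool` (binary inputs), all preconditions of `C_IIS` are `⊤`, so
worlds of `M^1` are pairs of an input vector and an IIS communication
pattern. -/
def M1W : Type := (Bool → Bool) × {g : CG Bool // g ∈ IIS2}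

/-- The indistinguishability relation of `M^1 = M^0 ⊙ C_IIS` for agent `p`,
per the communication-pattern restricted modal product: `I ∼⁰_p I'` iff
`I p = I' p`; `cp R_p cp'` iff (equivalently, and) `N⁻_cp(p) = N⁻_cp'(p)`;
and every agent in `N̄(cp,p) = N⁻_cp(p)` must not distinguish the source
worlds. -/
def M1rel (p : Bool) (u u' : M1W) : Prop :=
  u.1 p = u'.1 p ∧ inN u.2.val p = inN u'.2.val p ∧
    inN u.2.val p = inN u'.2.val p ∧
    ∀ q ∈ inN u.2.val p, u.1 q = u'.1 q

namespace M1proof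

def cg1 : CG Bool := fun x y => x = true ∧ y = false
def cg2 : CG Bool := fun x y => x = false ∧ y = true
def cg3 : CG Bool := fun x y => x ≠ y

theorem cg1_mem : cg1 ∈ IIS2 := Or.inl rfl
theorem cg2_mem : cg2 ∈ IIS2 := Or.inr (Or.inl rfl)
theorem cg3_mem : cg3 ∈ IIS2 := Or.inr (Or.inr rfl)

theorem mem_IIS2 {g : CG Bool} (h : g ∈ IIS2) : g = cg1 ∨ g = cg2 ∨ g = cg3 := h

theorem cg2_ne_cg1 : cg2 ≠ cg1 := by
  intro h
  have := congrFun (congrFun h false) true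
  rw [eq_iff_iff] at this
  simp [cg1, cg2] at this

theorem cg3_ne_cg1 : cg3 ≠ cg1 := by
  intro h
  have := congrFun (congrFun h false) true
  rw [eq_iff_iff] at this
  simp [cg1, cg3] at this

theorem cg3_ne_cg2 : cg3 ≠ cg2 := by
  intro h
  have := congrFun (congrFun h true) false
  rw [eq_iff_iff] at this
  simp [cg2, cg3] at this

open Classical in
noncomputable def idx (g : CG Bool) : Fin 3 :=
  if g = cg1 then 0 else if g = cg2 then 1 else 2

theorem idx_cg1 : idx cg1 = 0 := by simp [idx]
theorem idx_cg2 : idx cg2 = 1 := by simp [idx, cg2_ne_cg1]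
theorem idx_cg3 : idx cg3 = 2 := by simp [idx, cg3_ne_cg1, cg3_ne_cg2]

def tbl (x y : Bool) (i : Fin 3) : ZMod 12 :=
  match x, y, i with
  | false, false, 1 => 0
  | false, false, 2 => 1
  | false, false, 0 => 2
  | false, true,  0 => 3
  | false, true,  2 => 4
  | false, true,  1 => 5
  | true,  true,  1 => 6
  | true,  true,  2 => 7
  | true,  true,  0 => 8
  | true,  false, 0 => 9
  | true,  false, 2 => 10
  | true,  false, 1 => 11

def ivec (x y : Bool) : Bool → Bool := fun b => bif b then x else y

noncomputable def gOf (i : Fin 3) : {g : CG Bool // g ∈ IIS2} :=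
  match i with
  | 0 => ⟨cg1, cg1_mem⟩
  | 1 => ⟨cg2, cg2_mem⟩
  | 2 => ⟨cg3, cg3_mem⟩

noncomputable def itblN : ℕ → M1W
  | 0 => (ivec false false, gOf 1)
  | 1 => (ivec false false, gOf 2)
  | 2 => (ivec false false, gOf 0)
  | 3 => (ivec false true, gOf 0)
  | 4 => (ivec false true, gOf 2)
  | 5 => (ivec false true, gOf 1)
  | 6 => (ivec true true, gOf 1)
  | 7 => (ivec true true, gOf 2)
  | 8 => (ivec true true, gOf 0)
  | 9 => (ivec true false, gOf 0)
  | 10 => (ivec true false, gOf 2)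
  | _ => (ivec true false, gOf 1)

noncomputable def toF (w : M1W) : ZMod 12 := tbl (w.1 true) (w.1 false) (idx w.2.val)

noncomputable def invF (n : ZMod 12) : M1W := itblN n.val

theorem left_inv : Function.LeftInverse invF toF := by
  rintro ⟨I, g, hg⟩
  obtain ⟨x, y, rfl⟩ : ∃ x y, I = ivec x y :=
    ⟨I true, I false, funext fun b => by cases b <;> rfl⟩
  rcases mem_IIS2 hg with h | h | h <;> subst h <;>
    cases x <;> cases y <;>
    simp only [toF, idx_cg1, idx_cg2, idx_cg3] <;> rfl

theorem right_inv : Function.RightInverse invF toF := by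
  intro n
  have hlt : n.val < 12 := ZMod.val_lt n
  have hcast : ((n.val : ℕ) : ZMod 12) = n := ZMod.natCast_rightInverse n
  rw [← hcast]
  generalize n.val = k at hlt ⊢
  interval_cases k <;>
    (conv_lhs => arg 1; whnf) <;>
    simp only [invF, ZMod.val, toF, gOf, ivec, cond_true, cond_false,
      idx_cg1, idx_cg2, idx_cg3] <;> decide

noncomputable def e : M1W ≃ ZMod 12 := ⟨toF, invF, left_inv, right_inv⟩

theorem e_apply (w : M1W) : e w = tbl (w.1 true) (w.1 false) (idx w.2.val) := rfl

end M1proof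

/-- for two agents `a := true`, `b := false` with binary inputs
in the IIS model, the epistemic model `M^1 = M^0 ⊙ C_IIS` after one round of
the full-information protocol is structurally a 12-cycle: there is a bijection
of its worlds with `ZMod 12` (so there are exactly 12 worlds) under which the
indistinguishability edges between distinct worlds are exactly the edges of
the 12-cycle, alternating between agent `a` (edges at even positions) and
agent `b` (edges at odd positions). -/
theorem M1_is_twelve_cycle :
    ∃ e : M1W ≃ ZMod 12, ∀ w w' : M1W, w ≠ w' →
      (M1rel true w w' ↔
        ((e w' = e w + 1 ∧ Even (e w).val) ∨ (e w = e w' + 1 ∧ Even (e w').val))) ∧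
      (M1rel false w w' ↔
        ((e w' = e w + 1 ∧ Odd (e w).val) ∨ (e w = e w' + 1 ∧ Odd (e w').val))) := by
  refine ⟨M1proof.e, ?_⟩
  rintro ⟨I, g, hg⟩ ⟨I', g', hg'⟩ hne
  obtain ⟨x, y, rfl⟩ : ∃ x y, I = M1proof.ivec x y :=
    ⟨I true, I false, funext fun b => by cases b <;> rfl⟩
  obtain ⟨x', y', rfl⟩ : ∃ x y, I' = M1proof.ivec x y :=
    ⟨I' true, I' false, funext fun b => by cases b <;> rfl⟩
  rcases M1proof.mem_IIS2 hg with h | h | h <;> subst h <;>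
    rcases M1proof.mem_IIS2 hg' with h | h | h <;> subst h <;>
  first
  | (have hxy : ¬(x = x' ∧ y = y') := fun hh => hne (by rcases hh with ⟨rfl, rfl⟩; rfl)
     clear hne
     simp only [M1rel, M1proof.e_apply, M1proof.e, Equiv.coe_fn_mk, M1proof.toF, M1proof.idx_cg1, M1proof.idx_cg2, M1proof.idx_cg3, inN, Set.ext_iff,
       Set.mem_setOf_eq, M1proof.ivec, M1proof.cg1, M1proof.cg2, M1proof.cg3]
     revert hxy x y x' y'
     decide)
  | (clear hne
     simp only [M1rel, M1proof.e_apply, M1proof.e, Equiv.coe_fn_mk, M1proof.toF, M1proof.idx_cg1, M1proof.idx_cg2, M1proof.idx_cg3, inN, Set.ext_iff,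
       Set.mem_setOf_eq, M1proof.ivec, M1proof.cg1, M1proof.cg2, M1proof.cg3]
     revert x y x' y'
     decide)
end

section
/- For two agents a, b with binary inputs, the epistemic model M^0 ⊗ C_IIS obtained using the ordinary restricted modal product ⊗ (ignoring the N̄ function) is not isomorphic to a 12-cycle: it contains indistinguishability pairs between worlds of the form (w, cp) and (w', cp) with cp = {p}{q} and w ∼ w' for the receiving agent even though the sender distinguishes w from w', so the ordinary product fails to model one round of two-agent IIS. -/
/-- Worlds of `M^0 ⊗ C_IIS` (all preconditions are `⊤`): pairs of a world of
the 4-world initial model `M^0` (an input vector `I : Bool → Bool`) and an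
event. -/
def OW : Type := (Bool → Bool) × {g : CG Bool // g ∈ IIS2}

/-- The relation of the *ordinary* restricted modal product `M^0 ⊗ C_IIS`
(ignoring the `N̄` function): `(w,e) ∼'_p (w',e')` iff `w ∼_p w'` and
`e R_p e'`, where `I ∼⁰_p I'` iff `I p = I' p` and `cp R_p cp'` iff
`N⁻_cp(p) = N⁻_cp'(p)`. -/
def ordRel (p : Bool) (u u' : OW) : Prop :=
  u.1 p = u'.1 p ∧ inN u.2.val p = inN u'.2.val p

def cp1 : {g : CG Bool // g ∈ IIS2} := ⟨fun x y => x = true ∧ y = false, Or.inl rfl⟩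
def cpB : {g : CG Bool // g ∈ IIS2} := ⟨fun x y => x ≠ y, Or.inr (Or.inr rfl)⟩

/-- the model `M^0 ⊗ C_IIS` obtained with the ordinary restricted
modal product is not isomorphic to a 12-cycle; indeed it contains
indistinguishability pairs `(w, cp) ∼'_b (w', cp)` with `cp = {a}{b}` (the
graph with the single edge `a→b`, whose receiver is `b := false`) where
`w ∼_b w'` even though the sender `a` distinguishes `w` from `w'`.  Hence the
ordinary product fails to model one round of two-agent IIS. -/
theorem ordinary_product_fails :
    (∃ (w w' : Bool → Bool) (cp : {g : CG Bool // g ∈ IIS2}),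
      cp.val = (fun x y => x = true ∧ y = false) ∧
      ordRel false (w, cp) (w', cp) ∧
      w false = w' false ∧ w true ≠ w' true) ∧
    ¬ ∃ e : OW ≃ ZMod 12, ∀ u u' : OW, u ≠ u' →
        ((ordRel true u u' ∨ ordRel false u u') ↔
          (e u' = e u + 1 ∨ e u = e u' + 1)) := by
  constructor
  · exact ⟨fun x => x, fun _ => false, cp1, rfl, ⟨rfl, rfl⟩, rfl, by decide⟩
  · rintro ⟨e, he⟩
    set u : OW := ((fun _ => false), cp1) with hu
    set u1 : OW := ((fun x => x), cp1) with hu1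
    set u2 : OW := ((fun _ => false), cpB) with hu2
    set u3 : OW := ((fun x => !x), cp1) with hu3
    have hne1 : u ≠ u1 := by
      intro h; have := congrArg (fun p => p.1 true) h; simp at this
    have hne2 : u ≠ u2 := by
      intro h; have := congrArg (fun p => p.2.val false true) h
      simp [u, u2, cp1, cpB] at this
    have hne3 : u ≠ u3 := by
      intro h; have := congrArg (fun p => p.1 false) h; simp [u, u3] at this
    have hne12 : u1 ≠ u2 := by
      intro h; have := congrArg (fun p => p.1 true) h; simp at this
    have hne13 : u1 ≠ u3 := by
      intro h; have := congrArg (fun p => p.1 true) h; simp [u1, u3] at this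
    have hne23 : u2 ≠ u3 := by
      intro h; have := congrArg (fun p => p.1 false) h; simp [u2, u3] at this
    have hinN : inN cp1.val false = inN cpB.val false := by
      ext x; cases x <;> simp [inN, cp1, cpB]
    have h1 : e u1 = e u + 1 ∨ e u = e u1 + 1 :=
      (he u u1 hne1).mp (Or.inr ⟨rfl, rfl⟩)
    have h2 : e u2 = e u + 1 ∨ e u = e u2 + 1 :=
      (he u u2 hne2).mp (Or.inr ⟨rfl, hinN⟩)
    have h3 : e u3 = e u + 1 ∨ e u = e u3 + 1 :=
      (he u u3 hne3).mp (Or.inl ⟨rfl, rfl⟩)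
    have norm : ∀ v : OW, (e v = e u + 1 ∨ e u = e v + 1) →
        e v = e u + 1 ∨ e v = e u - 1 := by
      rintro v (h | h)
      · exact Or.inl h
      · exact Or.inr (eq_sub_of_add_eq h.symm)
    rcases norm u1 h1 with g1 | g1 <;> rcases norm u2 h2 with g2 | g2 <;>
      rcases norm u3 h3 with g3 | g3 <;>
    first
    | exact hne12 (e.injective (g1.trans g2.symm))
    | exact hne13 (e.injective (g1.trans g3.symm))
    | exact hne23 (e.injective (g2.trans g3.symm))
end

section
/- In the coordinated attack scenario with agents a and b, the product M ⊙ A' of the two-world initial model M with the single-event communication pattern model A' (event h, precondition ⊤, N̄(h,b) = {a}, N̄ empty otherwise) together with a 'message lost' event yields an epistemic model in which b distinguishes the two worlds (w, h) and (w', h) corresponding to successful delivery of a's distinct preferences; in contrast, the ordinary product M ⊗ A'' with any single successful-delivery event of precondition ⊤ leaves these two worlds indistinguishable to b. -/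
/-- An epistemic model over agents `Ag`, worlds `W`, propositions `P`. -/
structure KM (Ag W P : Type) where
  rel : Ag → W → W → Prop
  label : W → P → Prop

/-- An action model (preconditions taken semantically). -/
structure ActionModel (Ag W E : Type) where
  R : Ag → E → E → Prop
  Pre : E → W → Prop

/-- A communication pattern model. -/
structure CPModel (Ag W E : Type) where
  R : Ag → E → E → Prop
  Pre : E → W → Prop
  Nb : E → Ag → Set Ag

/-- Standard restricted modal product `M ⊗ A`. -/
def KM.otimes {Ag W E P : Type} (M : KM Ag W P) (A : ActionModel Ag W E) :
    KM Ag {p : W × E // A.Pre p.2 p.1} P where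
  rel a u u' := M.rel a u.1.1 u'.1.1 ∧ A.R a u.1.2 u'.1.2
  label u := M.label u.1.1

/-- Communication-pattern-model restricted modal product `M ⊙ C`. -/
def KM.odot {Ag W E P : Type} (M : KM Ag W P) (C : CPModel Ag W E) :
    KM Ag {p : W × E // C.Pre p.2 p.1} P where
  rel a u u' := M.rel a u.1.1 u'.1.1 ∧ C.R a u.1.2 u'.1.2 ∧
    C.Nb u.1.2 a = C.Nb u'.1.2 a ∧ ∀ b ∈ C.Nb u.1.2 a, M.rel b u.1.1 u'.1.1
  label u := M.label u.1.1

/-! Coordinated attack: agents `a := true` and `b := false`.  The initial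
model `M` has two worlds (`false` = preference `d`, `true` = preference `n`);
`a` distinguishes them, `b` does not.  The labeling records `a`'s
preference. -/

def Mca : KM Bool Bool Bool where
  rel p w w' := if p = true then w = w' else True
  label w v := w = v

/-- The communication pattern model `A'`: events `true = h` (successful
delivery of `a`'s message to `b`) and `false` (message lost); all
preconditions `⊤`; `a` cannot distinguish any events (messages may be lost),
`b` distinguishes delivery from loss; `N̄(h,b) = {a}` and `N̄ = ∅`
otherwise. -/
def Aca : CPModel Bool Bool Bool where
  R p e e' := if p = true then True else e = e'
  Pre _ _ := True
  Nb e p := match e, p with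
    | true, false => {true}
    | _, _ => ∅

/-- in the product `M ⊙ A'`, agent `b` distinguishes the two
worlds `(w, h)` and `(w', h)` corresponding to successful delivery of `a`'s
distinct preferences; in contrast, for the ordinary product `M ⊗ A''` with
*any* single successful-delivery event `h` of precondition `⊤`, these two
worlds remain indistinguishable to `b`. -/
theorem coordinated_attack :
    ¬ (Mca.odot Aca).rel false ⟨(false, true), trivial⟩ ⟨(true, true), trivial⟩ ∧
    ∀ R'' : Bool → Bool → Bool → Prop, R'' false true true →
      (Mca.otimes ⟨R'', fun _ _ => True⟩).rel false
        ⟨(false, true), trivial⟩ ⟨(true, true), trivial⟩ := by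
  constructor
  · rintro ⟨-, -, -, h⟩
    have := h true (by simp [Aca, Set.mem_singleton_iff])
    simp [Mca] at this
  · intro R'' hR
    exact ⟨by simp [Mca], hR⟩
end

section
/- The number of communication graphs allowed by the n-agent IIS adversary (graphs induced by ordered partitions of the agent set into nonempty concurrency classes) equals the n-th ordered Bell number (Fubini number), i.e., the number of ordered set partitions of an n-element set; distinct ordered partitions induce distinct communication graphs. -/
/-- `P` is an ordered partition of the agent set into nonempty, pairwise
disjoint concurrency classes covering all agents. -/
def IsOrderedPartition {Ag : Type} (P : List (Set Ag)) : Prop :=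
  (∀ C ∈ P, C.Nonempty) ∧ P.Pairwise (fun C D => Disjoint C D) ∧
    ∀ x : Ag, ∃ C ∈ P, x ∈ C

/-- The communication graph induced by an ordered partition `[C_1,…,C_k]`:
a directed edge `(x,y)` for every `x ∈ C_i`, `y ∈ C_j` with `i ≤ j` and
`x ≠ y`. -/
def IISgraph {Ag : Type} (P : List (Set Ag)) : CG Ag := fun x y =>
  x ≠ y ∧ ∃ (i j : ℕ) (hi : i < P.length) (hj : j < P.length),
    i ≤ j ∧ x ∈ P.get ⟨i, hi⟩ ∧ y ∈ P.get ⟨j, hj⟩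

/-- Auxiliary: `P` is an ordered partition of the set `S`. -/
def IsOP {Ag : Type} (S : Set Ag) (P : List (Set Ag)) : Prop :=
  (∀ C ∈ P, C.Nonempty) ∧ P.Pairwise (fun C D => Disjoint C D) ∧
    (∀ x ∈ S, ∃ C ∈ P, x ∈ C) ∧ (∀ C ∈ P, C ⊆ S)

lemma mem_get_unique {Ag : Type} {P : List (Set Ag)}
    (hP : P.Pairwise (fun C D => Disjoint C D)) {x : Ag} {i j : Fin P.length}
    (hi : x ∈ P.get i) (hj : x ∈ P.get j) : i = j := by
  rcases lt_trichotomy i j with h | h | h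
  · exact absurd hj ((Set.disjoint_left.mp (List.pairwise_iff_get.mp hP i j h)) hi)
  · exact h
  · exact absurd hi ((Set.disjoint_left.mp (List.pairwise_iff_get.mp hP j i h)) hj)

/-- Characterization of the head class via the graph. -/
lemma head_char {Ag : Type} {S : Set Ag} {C : Set Ag} {P' : List (Set Ag)}
    (h : IsOP S (C :: P')) (x : Ag) :
    x ∈ C ↔ (x ∈ S ∧ ∀ y ∈ S, y ≠ x → IISgraph (C :: P') x y) := by
  obtain ⟨hne, hdisj, hcov, hsub⟩ := h
  constructor
  · intro hxC
    refine ⟨hsub C (List.mem_cons_self) hxC, fun y hyS hyx => ?_⟩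
    obtain ⟨D, hD, hyD⟩ := hcov y hyS
    obtain ⟨⟨j, hj⟩, rfl⟩ := List.mem_iff_get.mp hD
    exact ⟨Ne.symm hyx, 0, j, Nat.succ_pos _, hj, Nat.zero_le _, hxC, hyD⟩
  · rintro ⟨hxS, hall⟩
    obtain ⟨z, hzC⟩ := hne C (List.mem_cons_self)
    by_cases hzx : z = x
    · exact hzx ▸ hzC
    · obtain ⟨-, i, j, hi, hj, hij, hx, hz⟩ :=
        hall z (hsub C (List.mem_cons_self) hzC) hzx
      have : (⟨j, hj⟩ : Fin (C :: P').length) = ⟨0, Nat.succ_pos _⟩ :=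
        mem_get_unique hdisj hz hzC
      have hj0 : j = 0 := by simpa using congrArg Fin.val this
      have hi0 : i = 0 := Nat.le_antisymm (hj0 ▸ hij) (Nat.zero_le _)
      subst hi0
      exact hx

/-- The tail graph in terms of the full graph. -/
lemma tail_graph {Ag : Type} {S : Set Ag} {C : Set Ag} {P' : List (Set Ag)}
    (h : IsOP S (C :: P')) (x y : Ag) :
    IISgraph P' x y ↔ (x ∉ C ∧ y ∉ C ∧ IISgraph (C :: P') x y) := by
  obtain ⟨hne, hdisj, hcov, hsub⟩ := h
  have hCd : ∀ D ∈ P', Disjoint C D := (List.pairwise_cons.mp hdisj).1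
  constructor
  · rintro ⟨hxy, i, j, hi, hj, hij, hx, hy⟩
    refine ⟨fun hxC => ?_, fun hyC => ?_, hxy, i + 1, j + 1,
      Nat.succ_lt_succ hi, Nat.succ_lt_succ hj, Nat.succ_le_succ hij, hx, hy⟩
    · exact (Set.disjoint_left.mp (hCd _ (List.get_mem P' _))) hxC hx
    · exact (Set.disjoint_left.mp (hCd _ (List.get_mem P' _))) hyC hy
  · rintro ⟨hxC, hyC, hxy, i, j, hi, hj, hij, hx, hy⟩
    match i, j with
    | 0, _ => exact absurd hx hxC
    | _ + 1, 0 => exact absurd (Nat.not_succ_le_zero _ hij) (fun h => h)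
    | i + 1, j + 1 =>
      exact ⟨hxy, i, j, Nat.lt_of_succ_lt_succ hi, Nat.lt_of_succ_lt_succ hj,
        Nat.le_of_succ_le_succ hij, hx, hy⟩

lemma IISgraph_inj_aux {Ag : Type} :
    ∀ (P : List (Set Ag)) (Q : List (Set Ag)) (S : Set Ag),
      IsOP S P → IsOP S Q → IISgraph P = IISgraph Q → P = Q := by
  intro P
  induction P with
  | nil =>
    intro Q S hP hQ _
    have hSempty : ∀ x, x ∉ S := by
      intro x hx
      obtain ⟨C, hC, -⟩ := hP.2.2.1 x hx
      simp at hC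
    cases Q with
    | nil => rfl
    | cons D Q' =>
      obtain ⟨z, hz⟩ := hQ.1 D (List.mem_cons_self)
      exact absurd (hQ.2.2.2 D (List.mem_cons_self) hz) (hSempty z)
  | cons C P' ih =>
    intro Q S hP hQ hg
    cases Q with
    | nil =>
      obtain ⟨z, hz⟩ := hP.1 C (List.mem_cons_self)
      have hzS := hP.2.2.2 C (List.mem_cons_self) hz
      obtain ⟨D, hD, -⟩ := hQ.2.2.1 z hzS
      simp at hD
    | cons D Q' =>
      have hCD : C = D := by
        ext x
        rw [head_char hP x, head_char hQ x, hg]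
      subst hCD
      have hP' : IsOP (S \ C) P' := by
        obtain ⟨hne, hdisj, hcov, hsub⟩ := hP
        have hCd : ∀ D ∈ P', Disjoint C D := (List.pairwise_cons.mp hdisj).1
        refine ⟨fun E hE => hne E (List.mem_cons_of_mem _ hE),
          (List.pairwise_cons.mp hdisj).2, fun x hx => ?_,
          fun E hE => fun a ha => ⟨hsub E (List.mem_cons_of_mem _ hE) ha,
            fun haC => (Set.disjoint_left.mp (hCd E hE)) haC ha⟩⟩
        obtain ⟨E, hE, hxE⟩ := hcov x hx.1
        rcases List.mem_cons.mp hE with rfl | hE'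
        · exact absurd hxE hx.2
        · exact ⟨E, hE', hxE⟩
      have hQ' : IsOP (S \ C) Q' := by
        obtain ⟨hne, hdisj, hcov, hsub⟩ := hQ
        have hCd : ∀ D ∈ Q', Disjoint C D := (List.pairwise_cons.mp hdisj).1
        refine ⟨fun E hE => hne E (List.mem_cons_of_mem _ hE),
          (List.pairwise_cons.mp hdisj).2, fun x hx => ?_,
          fun E hE => fun a ha => ⟨hsub E (List.mem_cons_of_mem _ hE) ha,
            fun haC => (Set.disjoint_left.mp (hCd E hE)) haC ha⟩⟩
        obtain ⟨E, hE, hxE⟩ := hcov x hx.1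
        rcases List.mem_cons.mp hE with rfl | hE'
        · exact absurd hxE hx.2
        · exact ⟨E, hE', hxE⟩
      have hg' : IISgraph P' = IISgraph Q' := by
        funext x y
        rw [eq_iff_iff, tail_graph hP x y, tail_graph hQ x y, hg]
      exact congrArg (C :: ·) (ih Q' (S \ C) hP' hQ' hg')

/-- the map from ordered partitions of the `n`-agent set to the
communication graphs they induce is injective (distinct ordered partitions
induce distinct graphs), and consequently the number of communication graphs
allowed by the `n`-agent IIS adversary equals the `n`-th ordered Bell (Fubini)
number, i.e. the number of ordered set partitions of an `n`-element set. -/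
theorem IIS_graph_count (n : ℕ) :
    Set.InjOn (IISgraph (Ag := Fin n))
      {P : List (Set (Fin n)) | IsOrderedPartition P} ∧
    Set.ncard {g : CG (Fin n) |
        ∃ P : List (Set (Fin n)), IsOrderedPartition P ∧ g = IISgraph P} =
      Set.ncard {P : List (Set (Fin n)) | IsOrderedPartition P} := by
  have key : Set.InjOn (IISgraph (Ag := Fin n))
      {P : List (Set (Fin n)) | IsOrderedPartition P} := by
    intro P hP Q hQ hg
    have hP' : IsOP (Set.univ : Set (Fin n)) P :=
      ⟨hP.1, hP.2.1, fun x _ => hP.2.2 x, fun C _ => Set.subset_univ C⟩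
    have hQ' : IsOP (Set.univ : Set (Fin n)) Q :=
      ⟨hQ.1, hQ.2.1, fun x _ => hQ.2.2 x, fun C _ => Set.subset_univ C⟩
    exact IISgraph_inj_aux P Q Set.univ hP' hQ' hg
  refine ⟨key, ?_⟩
  have himg : {g : CG (Fin n) |
      ∃ P : List (Set (Fin n)), IsOrderedPartition P ∧ g = IISgraph P} =
      IISgraph '' {P : List (Set (Fin n)) | IsOrderedPartition P} := by
    ext g
    simp only [Set.mem_image, Set.mem_setOf_eq]
    exact ⟨fun ⟨P, h1, h2⟩ => ⟨P, h1, h2.symm⟩, fun ⟨P, h1, h2⟩ => ⟨P, h1, h2.symm⟩⟩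
  rw [himg, Set.ncard_image_of_injOn key]
end
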